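/- arXiv:2503.05606 — 2 statements merged into one kernel-verified Lean document; each statement's English description precedes it below -/
import Mathlib

section
/- Under the standing assumptions on N, set q := Λ₂/Λ₁. Then for all s, t ∈ [t₀, T] with s ≤ t and every x ∈ ℝ^d one has the first-derivative bounds ‖DΦ_{s,t}(x)‖ ≤ e^{Λ₁(t−s)} and ‖DΦ_{t,s}(x)‖ ≤ e^{Λ₁(t−s)}, and the second-derivative bounds ‖D²Φ_{s,t}(x)‖ ≤ q·(e^{2Λ₁(t−s)} − e^{Λ₁(t−s)}) and ‖D²Φ_{t,s}(x)‖ ≤ q·(e^{2Λ₁(t−s)} − e^{Λ₁(t−s)}), where D²Φ is measured in the norm of bilinear maps on ℝ^d. -/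
/-!
Along a trajectory, `DΦ_{s,·}(x)` solves the linear equation `A' = DN·A` with `‖DN‖ ≤ Λ₁`, and
`D²Φ_{s,·}(x)[v,w]` solves a linear equation with the same linear part, forced by
`D²N[DΦ v, DΦ w]`, which the first bound makes `O(e^{2Λ₁|τ-s|})`. A Gronwall comparison in the
elapsed time `r = |τ - s|` with the exact solutions `e^{Λ₁ r}` of `B' = Λ₁ B` and
`(Λ₂/Λ₁)(e^{2Λ₁ r} - e^{Λ₁ r})` of `B' = Λ₁ B + Λ₂ e^{2Λ₁ r}` (vanishing at `0`) gives both
bounds. Backward flows reduce to forward ones by reversing time, which only flips the sign of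
the derivative.
-/

open Set Real

theorem hasDerivAt_exp_const_mul (k r : ℝ) :
    HasDerivAt (fun r => exp (k * r)) (k * exp (k * r)) r := by
  simpa [mul_comm] using ((hasDerivAt_id r).const_mul k).exp

section Gronwall

variable {E : Type*} [NormedAddCommGroup E] [NormedSpace ℝ E]

theorem norm_le_of_norm_deriv_le_linear_bound {u u' : ℝ → E} {B g : ℝ → ℝ}
    {K a b : ℝ} (hab : a ≤ b) (hu : ∀ τ ∈ Icc a b, HasDerivAt u (u' τ) τ)
    (hB : ∀ r, HasDerivAt B (K * B r + g r) r) (ha : ‖u a‖ ≤ B 0)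
    (hbound : ∀ τ ∈ Icc a b, ‖u' τ‖ ≤ K * ‖u τ‖ + g (τ - a)) :
    ‖u b‖ ≤ B (b - a) := by
  -- the perturbed barrier outgrows what the differential inequality allows, so it is never hit
  have hbarrier : ∀ ε > 0, ‖u b‖ ≤ B (b - a) + ε * exp ((K + 1) * (b - a)) := by
    intro ε hε
    have hF : ∀ τ, HasDerivAt (fun τ => B (τ - a) + ε * exp ((K + 1) * (τ - a)))
        (K * (B (τ - a) + ε * exp ((K + 1) * (τ - a))) + g (τ - a)
          + ε * exp ((K + 1) * (τ - a))) τ := by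
      intro τ
      refine (((hB (τ - a)).comp_sub_const τ a).add
        (((hasDerivAt_exp_const_mul (K + 1) (τ - a)).comp_sub_const τ a).const_mul ε)).congr_deriv ?_
      ring
    refine image_norm_le_of_norm_deriv_right_lt_deriv_boundary
      (fun τ hτ => (hu τ hτ).continuousAt.continuousWithinAt)
      (fun τ hτ => (hu τ (Ico_subset_Icc_self hτ)).hasDerivWithinAt)
      (by simp only [sub_self, mul_zero, exp_zero, mul_one]; linarith) hF
      (fun τ hτ hτF => ?_) (right_mem_Icc.2 hab)
    have hτ' := hbound τ (Ico_subset_Icc_self hτ)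
    have hpos : 0 < ε * exp ((K + 1) * (τ - a)) := by positivity
    rw [hτF] at hτ'
    linarith
  refine le_of_forall_pos_le_add fun δ hδ => ?_
  have hexp := (exp_pos ((K + 1) * (b - a))).ne'
  simpa [div_mul_cancel₀ _ hexp] using hbarrier (δ / exp ((K + 1) * (b - a))) (by positivity)

theorem norm_le_of_norm_deriv_le_linear_bound_uIcc {u u' : ℝ → E} {B g : ℝ → ℝ}
    {K s t : ℝ} (hu : ∀ τ ∈ uIcc s t, HasDerivAt u (u' τ) τ)
    (hB : ∀ r, HasDerivAt B (K * B r + g r) r) (hs : ‖u s‖ ≤ B 0)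
    (hbound : ∀ τ ∈ uIcc s t, ‖u' τ‖ ≤ K * ‖u τ‖ + g |τ - s|) :
    ‖u t‖ ≤ B |t - s| := by
  rcases le_total s t with hst | hts
  · rw [uIcc_of_le hst] at hu hbound
    rw [abs_of_nonneg (sub_nonneg.2 hst)]
    refine norm_le_of_norm_deriv_le_linear_bound hst hu hB hs fun τ hτ => ?_
    simpa only [abs_of_nonneg (sub_nonneg.2 hτ.1)] using hbound τ hτ
  · rw [uIcc_of_ge hts] at hu hbound
    have hreflect : ∀ σ ∈ Icc t s, t + s - σ ∈ Icc t s := fun σ hσ =>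
      ⟨by linarith [hσ.2], by linarith [hσ.1]⟩
    have h := norm_le_of_norm_deriv_le_linear_bound (u := fun σ => u (t + s - σ))
      (u' := fun σ => -u' (t + s - σ)) hts
      (fun σ hσ => (hu _ (hreflect σ hσ)).comp_const_sub (t + s) σ) hB (by simpa using hs)
      (fun σ hσ => by
        have hσ' : |t + s - σ - s| = σ - t := by
          rw [show t + s - σ - s = t - σ by ring, abs_of_nonpos (sub_nonpos.2 hσ.1), neg_sub]
        simpa only [norm_neg, hσ'] using hbound _ (hreflect σ hσ))
    simpa [abs_of_nonpos (sub_nonpos.2 hts)] using h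

end Gronwall

section Flow

variable {E : Type*} [NormedAddCommGroup E] [NormedSpace ℝ E] {N : ℝ → E → E}
  {Φ : ℝ → ℝ → E → E} {DΦ : ℝ → ℝ → E → E →L[ℝ] E} {D2Φ : ℝ → ℝ → E → E →L[ℝ] E →L[ℝ] E}
  {t₀ T Λ₁ Λ₂ s t : ℝ}

theorem norm_flowDeriv_le (hDN : ∀ t w, ‖fderiv ℝ (N t) w‖ ≤ Λ₁)
    (hDΦ_init : ∀ s x, DΦ s s x = ContinuousLinearMap.id ℝ E)
    (hDΦ_ode : ∀ s x, ∀ t ∈ Icc t₀ T,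
      HasDerivAt (fun τ => DΦ s τ x) ((fderiv ℝ (N t) (Φ s t x)).comp (DΦ s t x)) t)
    (hs : s ∈ Icc t₀ T) (ht : t ∈ Icc t₀ T) (x : E) :
    ‖DΦ s t x‖ ≤ exp (Λ₁ * |t - s|) := by
  refine norm_le_of_norm_deriv_le_linear_bound_uIcc (g := 0)
    (fun τ hτ => hDΦ_ode s x τ (uIcc_subset_Icc hs ht hτ))
    (fun r => by simpa only [Pi.zero_apply, add_zero] using hasDerivAt_exp_const_mul Λ₁ r)
    (by simpa [hDΦ_init] using ContinuousLinearMap.norm_id_le) fun τ _ => ?_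
  calc _ ≤ ‖fderiv ℝ (N τ) (Φ s τ x)‖ * ‖DΦ s τ x‖ := ContinuousLinearMap.opNorm_comp_le _ _
    _ ≤ Λ₁ * ‖DΦ s τ x‖ + 0 := by rw [add_zero]; gcongr; exact hDN _ _

theorem norm_flowDeriv2_apply_le (hΛ₁ : 0 < Λ₁) (hDN : ∀ t w, ‖fderiv ℝ (N t) w‖ ≤ Λ₁)
    (hD2N : ∀ t w, ‖fderiv ℝ (fderiv ℝ (N t)) w‖ ≤ Λ₂)
    (hDΦ_init : ∀ s x, DΦ s s x = ContinuousLinearMap.id ℝ E)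
    (hDΦ_ode : ∀ s x, ∀ t ∈ Icc t₀ T,
      HasDerivAt (fun τ => DΦ s τ x) ((fderiv ℝ (N t) (Φ s t x)).comp (DΦ s t x)) t)
    (hD2Φ_init : ∀ s x, D2Φ s s x = 0)
    (hD2Φ_ode : ∀ s x, ∀ t ∈ Icc t₀ T, ∀ v w : E,
      HasDerivAt (fun τ => D2Φ s τ x v w)
        (fderiv ℝ (N t) (Φ s t x) (D2Φ s t x v w)
          + fderiv ℝ (fderiv ℝ (N t)) (Φ s t x) (DΦ s t x v) (DΦ s t x w)) t)
    (hs : s ∈ Icc t₀ T) (ht : t ∈ Icc t₀ T) (x v w : E) :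
    ‖D2Φ s t x v w‖ ≤
      Λ₂ / Λ₁ * (exp (2 * Λ₁ * |t - s|) - exp (Λ₁ * |t - s|)) * ‖v‖ * ‖w‖ := by
  have hΛ₂ : 0 ≤ Λ₂ := (norm_nonneg _).trans (hD2N 0 0)
  refine norm_le_of_norm_deriv_le_linear_bound_uIcc (K := Λ₁)
    (B := fun r => Λ₂ / Λ₁ * (exp (2 * Λ₁ * r) - exp (Λ₁ * r)) * ‖v‖ * ‖w‖)
    (g := fun r => Λ₂ * exp (2 * Λ₁ * r) * ‖v‖ * ‖w‖)
    (fun τ hτ => hD2Φ_ode s x τ (uIcc_subset_Icc hs ht hτ) v w) (fun r => ?_)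
    (by simp [hD2Φ_init]) fun τ hτ => ?_
  · refine ((((hasDerivAt_exp_const_mul (2 * Λ₁) r).sub (hasDerivAt_exp_const_mul Λ₁ r)).const_mul
      (Λ₂ / Λ₁)).mul_const ‖v‖ |>.mul_const ‖w‖).congr_deriv ?_
    field_simp
    ring
  · have hA := norm_flowDeriv_le hDN hDΦ_init hDΦ_ode hs (uIcc_subset_Icc hs ht hτ) x
    set e := exp (Λ₁ * |τ - s|)
    calc _ ≤ ‖fderiv ℝ (N τ) (Φ s τ x) (D2Φ s τ x v w)‖
          + ‖fderiv ℝ (fderiv ℝ (N τ)) (Φ s τ x) (DΦ s τ x v) (DΦ s τ x w)‖ := norm_add_le _ _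
      _ ≤ Λ₁ * ‖D2Φ s τ x v w‖ + Λ₂ * (e * ‖v‖) * (e * ‖w‖) := by
        gcongr
        · exact (ContinuousLinearMap.le_opNorm _ _).trans (by gcongr; exact hDN _ _)
        · refine (ContinuousLinearMap.le_opNorm₂ _ _ _).trans ?_
          gcongr
          exacts [hD2N _ _, (ContinuousLinearMap.le_opNorm _ _).trans (by gcongr),
            (ContinuousLinearMap.le_opNorm _ _).trans (by gcongr)]
      _ = Λ₁ * ‖D2Φ s τ x v w‖ + Λ₂ * exp (2 * Λ₁ * |τ - s|) * ‖v‖ * ‖w‖ := by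
        rw [show 2 * Λ₁ * |τ - s| = Λ₁ * |τ - s| + Λ₁ * |τ - s| by ring, exp_add]
        ring

theorem norm_flowDeriv2_le (hΛ₁ : 0 < Λ₁) (hDN : ∀ t w, ‖fderiv ℝ (N t) w‖ ≤ Λ₁)
    (hD2N : ∀ t w, ‖fderiv ℝ (fderiv ℝ (N t)) w‖ ≤ Λ₂)
    (hDΦ_init : ∀ s x, DΦ s s x = ContinuousLinearMap.id ℝ E)
    (hDΦ_ode : ∀ s x, ∀ t ∈ Icc t₀ T,
      HasDerivAt (fun τ => DΦ s τ x) ((fderiv ℝ (N t) (Φ s t x)).comp (DΦ s t x)) t)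
    (hD2Φ_init : ∀ s x, D2Φ s s x = 0)
    (hD2Φ_ode : ∀ s x, ∀ t ∈ Icc t₀ T, ∀ v w : E,
      HasDerivAt (fun τ => D2Φ s τ x v w)
        (fderiv ℝ (N t) (Φ s t x) (D2Φ s t x v w)
          + fderiv ℝ (fderiv ℝ (N t)) (Φ s t x) (DΦ s t x v) (DΦ s t x w)) t)
    (hs : s ∈ Icc t₀ T) (ht : t ∈ Icc t₀ T) (x : E) :
    ‖D2Φ s t x‖ ≤ Λ₂ / Λ₁ * (exp (2 * Λ₁ * |t - s|) - exp (Λ₁ * |t - s|)) := by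
  have hΛ₂ : 0 ≤ Λ₂ := (norm_nonneg _).trans (hD2N 0 0)
  have hexp : exp (Λ₁ * |t - s|) ≤ exp (2 * Λ₁ * |t - s|) := by
    gcongr
    nlinarith [abs_nonneg (t - s)]
  refine ContinuousLinearMap.opNorm_le_bound₂ _ (mul_nonneg (by positivity) (sub_nonneg.2 hexp)) fun v w =>
    norm_flowDeriv2_apply_le hΛ₁ hDN hD2N hDΦ_init hDΦ_ode hD2Φ_init hD2Φ_ode hs ht x v w

end Flow

theorem stmt0_general
    (d : ℕ) (t₀ T Λ₁ Λ₂ : ℝ) (hΛ₁ : 0 < Λ₁)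
    (N : ℝ → EuclideanSpace ℝ (Fin d) → EuclideanSpace ℝ (Fin d))
    -- uniform bounds on the first and second spatial derivatives
    (hDN : ∀ t w, ‖fderiv ℝ (N t) w‖ ≤ Λ₁)
    (hD2N : ∀ t w, ‖fderiv ℝ (fderiv ℝ (N t)) w‖ ≤ Λ₂)
    -- the nonautonomous flow of N
    (Φ : ℝ → ℝ → EuclideanSpace ℝ (Fin d) → EuclideanSpace ℝ (Fin d))
    (DΦ : ℝ → ℝ → EuclideanSpace ℝ (Fin d) →
      (EuclideanSpace ℝ (Fin d) →L[ℝ] EuclideanSpace ℝ (Fin d)))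
    (D2Φ : ℝ → ℝ → EuclideanSpace ℝ (Fin d) →
      (EuclideanSpace ℝ (Fin d) →L[ℝ]
        (EuclideanSpace ℝ (Fin d) →L[ℝ] EuclideanSpace ℝ (Fin d))))
    -- spatial differentiability of the flow and the first variational equation
    (hDΦ_init : ∀ s x, DΦ s s x = ContinuousLinearMap.id ℝ (EuclideanSpace ℝ (Fin d)))
    (hDΦ_ode : ∀ s x, ∀ t ∈ Icc t₀ T,
      HasDerivAt (fun τ => DΦ s τ x) ((fderiv ℝ (N t) (Φ s t x)).comp (DΦ s t x)) t)
    -- second spatial derivative of the flow and the second variational equation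
    (hD2Φ_init : ∀ s x, D2Φ s s x = 0)
    (hD2Φ_ode : ∀ s x, ∀ t ∈ Icc t₀ T, ∀ v w : EuclideanSpace ℝ (Fin d),
      HasDerivAt (fun τ => D2Φ s τ x v w)
        (fderiv ℝ (N t) (Φ s t x) (D2Φ s t x v w)
          + fderiv ℝ (fderiv ℝ (N t)) (Φ s t x) (DΦ s t x v) (DΦ s t x w)) t) :
    ∀ s ∈ Icc t₀ T, ∀ t ∈ Icc t₀ T, s ≤ t → ∀ x : EuclideanSpace ℝ (Fin d),
      ‖DΦ s t x‖ ≤ Real.exp (Λ₁ * (t - s)) ∧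
      ‖DΦ t s x‖ ≤ Real.exp (Λ₁ * (t - s)) ∧
      ‖D2Φ s t x‖ ≤ (Λ₂ / Λ₁) * (Real.exp (2 * Λ₁ * (t - s)) - Real.exp (Λ₁ * (t - s))) ∧
      ‖D2Φ t s x‖ ≤ (Λ₂ / Λ₁) * (Real.exp (2 * Λ₁ * (t - s)) - Real.exp (Λ₁ * (t - s))) := by
  intro s hs t ht hst x
  have hfwd : |t - s| = t - s := abs_of_nonneg (sub_nonneg.2 hst)
  have hbwd : |s - t| = t - s := by rw [abs_sub_comm, hfwd]
  refine ⟨?_, ?_, ?_, ?_⟩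
  · simpa only [hfwd] using norm_flowDeriv_le hDN hDΦ_init hDΦ_ode hs ht x
  · simpa only [hbwd] using norm_flowDeriv_le hDN hDΦ_init hDΦ_ode ht hs x
  · simpa only [hfwd] using
      norm_flowDeriv2_le hΛ₁ hDN hD2N hDΦ_init hDΦ_ode hD2Φ_init hD2Φ_ode hs ht x
  · simpa only [hbwd] using
      norm_flowDeriv2_le hΛ₁ hDN hD2N hDΦ_init hDΦ_ode hD2Φ_init hD2Φ_ode ht hs x

/-- Under the standing assumptions on the nonautonomous vector field `N`
(bounded measurable in time, `C²` in space, with `‖DN_t‖ ≤ Λ₁` and `‖D²N_t‖ ≤ Λ₂`), the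
nonautonomous flow `Φ` of `N` (with group laws, first and second variational equations)
satisfies, for `t₀ ≤ s ≤ t ≤ T` and every `x`, the bounds
`‖DΦ_{s,t}(x)‖ ≤ e^{Λ₁(t−s)}`, `‖DΦ_{t,s}(x)‖ ≤ e^{Λ₁(t−s)}`,
`‖D²Φ_{s,t}(x)‖ ≤ (Λ₂/Λ₁)(e^{2Λ₁(t−s)} − e^{Λ₁(t−s)})` and
`‖D²Φ_{t,s}(x)‖ ≤ (Λ₂/Λ₁)(e^{2Λ₁(t−s)} − e^{Λ₁(t−s)})`. -/
theorem stmt0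
    (d : ℕ) (t₀ T Λ₁ Λ₂ : ℝ) (ht : t₀ < T) (hΛ₁ : 0 < Λ₁) (hΛ₂ : 0 < Λ₂)
    (N : ℝ → EuclideanSpace ℝ (Fin d) → EuclideanSpace ℝ (Fin d))
    -- boundedness and measurability in time
    (hNmeas : ∀ x, Measurable fun t => N t x)
    (hNbdd : ∀ x, ∃ M : ℝ, ∀ t ∈ Icc t₀ T, ‖N t x‖ ≤ M)
    -- C² regularity in space
    (hNC2 : ∀ t, ContDiff ℝ 2 (N t))
    -- uniform bounds on the first and second spatial derivatives
    (hDN : ∀ t w, ‖fderiv ℝ (N t) w‖ ≤ Λ₁)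
    (hD2N : ∀ t w, ‖fderiv ℝ (fderiv ℝ (N t)) w‖ ≤ Λ₂)
    -- the nonautonomous flow of N
    (Φ : ℝ → ℝ → EuclideanSpace ℝ (Fin d) → EuclideanSpace ℝ (Fin d))
    (DΦ : ℝ → ℝ → EuclideanSpace ℝ (Fin d) →
      (EuclideanSpace ℝ (Fin d) →L[ℝ] EuclideanSpace ℝ (Fin d)))
    (D2Φ : ℝ → ℝ → EuclideanSpace ℝ (Fin d) →
      (EuclideanSpace ℝ (Fin d) →L[ℝ]
        (EuclideanSpace ℝ (Fin d) →L[ℝ] EuclideanSpace ℝ (Fin d))))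
    (hflow_init : ∀ s x, Φ s s x = x)
    (hflow_ode : ∀ s x, ∀ t ∈ Icc t₀ T, HasDerivAt (fun τ => Φ s τ x) (N t (Φ s t x)) t)
    (hgroup : ∀ t₁ t₂ t₃ : ℝ, ∀ x, Φ t₂ t₃ (Φ t₁ t₂ x) = Φ t₁ t₃ x)
    (hinv : ∀ s t : ℝ, ∀ x, Φ t s (Φ s t x) = x)
    -- spatial differentiability of the flow and the first variational equation
    (hΦC2 : ∀ s t : ℝ, ContDiff ℝ 2 (Φ s t))
    (hDΦ_fderiv : ∀ s t x, DΦ s t x = fderiv ℝ (Φ s t) x)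
    (hDΦ_init : ∀ s x, DΦ s s x = ContinuousLinearMap.id ℝ (EuclideanSpace ℝ (Fin d)))
    (hDΦ_ode : ∀ s x, ∀ t ∈ Icc t₀ T,
      HasDerivAt (fun τ => DΦ s τ x) ((fderiv ℝ (N t) (Φ s t x)).comp (DΦ s t x)) t)
    -- second spatial derivative of the flow and the second variational equation
    (hD2Φ_init : ∀ s x, D2Φ s s x = 0)
    (hD2Φ_ode : ∀ s x, ∀ t ∈ Icc t₀ T, ∀ v w : EuclideanSpace ℝ (Fin d),
      HasDerivAt (fun τ => D2Φ s τ x v w)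
        (fderiv ℝ (N t) (Φ s t x) (D2Φ s t x v w)
          + fderiv ℝ (fderiv ℝ (N t)) (Φ s t x) (DΦ s t x v) (DΦ s t x w)) t) :
    ∀ s ∈ Icc t₀ T, ∀ t ∈ Icc t₀ T, s ≤ t → ∀ x : EuclideanSpace ℝ (Fin d),
      ‖DΦ s t x‖ ≤ Real.exp (Λ₁ * (t - s)) ∧
      ‖DΦ t s x‖ ≤ Real.exp (Λ₁ * (t - s)) ∧
      ‖D2Φ s t x‖ ≤ (Λ₂ / Λ₁) * (Real.exp (2 * Λ₁ * (t - s)) - Real.exp (Λ₁ * (t - s))) ∧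
      ‖D2Φ t s x‖ ≤ (Λ₂ / Λ₁) * (Real.exp (2 * Λ₁ * (t - s)) - Real.exp (Λ₁ * (t - s))) :=
  stmt0_general d t₀ T Λ₁ Λ₂ hΛ₁ N hDN hD2N Φ DΦ D2Φ hDΦ_init hDΦ_ode hD2Φ_init hD2Φ_ode
end

section
/- Suppose d = k and there exists a nonzero nonnegative b ∈ L¹((t₀,T);ℝ) such that |B(t,x)ᵀ y| ≥ b(t)|y| for almost every t ∈ (t₀,T) and all (x,y) ∈ ℝ^d × ℝ^d. Then for each i ∈ {1,2} the Gramian is uniformly coercive: yᵀ 𝒩ᵢ(u) y ≥ (e^{−2Λ₁Δt₀} ‖b‖₁² / Δt₀) |y|² for every y ∈ ℝ^d, every x⁰ ∈ ℝ^d and every u ∈ L^∞((t₀,T);ℝ^k). Hence, with Cᵢ := Δt₀ e^{2Λ₁Δt₀} ‖b‖₁⁻², one has ℱ(Cᵢ) = L^∞((t₀,T);ℝ^k). -/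
open Set intervalIntegral MeasureTheory Filter
open scoped RealInnerProductSpace

/-- `K_u(t) := DΦ_{t,τ}(x_u(t)) B(t, x_u(t))`. -/
noncomputable def Kker {d k : ℕ} (τ : ℝ)
    (DΦ : ℝ → ℝ → EuclideanSpace ℝ (Fin d) →
      (EuclideanSpace ℝ (Fin d) →L[ℝ] EuclideanSpace ℝ (Fin d)))
    (Bm : ℝ → EuclideanSpace ℝ (Fin d) →
      (EuclideanSpace ℝ (Fin k) →L[ℝ] EuclideanSpace ℝ (Fin d)))
    (x : ℝ → EuclideanSpace ℝ (Fin d)) (t : ℝ) :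
    EuclideanSpace ℝ (Fin k) →L[ℝ] EuclideanSpace ℝ (Fin d) :=
  (DΦ t τ (x t)).comp (Bm t (x t))

/-- The trajectory-dependent controllability Gramian
`𝒩 = ∫_{t₀}^T DΦ_{t,τ}(x_u(t)) B B^⊤ DΦ_{t,τ}(x_u(t))^⊤ dt`. -/
noncomputable def gram {d k : ℕ} (t₀ T τ : ℝ)
    (DΦ : ℝ → ℝ → EuclideanSpace ℝ (Fin d) →
      (EuclideanSpace ℝ (Fin d) →L[ℝ] EuclideanSpace ℝ (Fin d)))
    (Bm : ℝ → EuclideanSpace ℝ (Fin d) →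
      (EuclideanSpace ℝ (Fin k) →L[ℝ] EuclideanSpace ℝ (Fin d)))
    (x : ℝ → EuclideanSpace ℝ (Fin d)) :
    EuclideanSpace ℝ (Fin d) →L[ℝ] EuclideanSpace ℝ (Fin d) :=
  ∫ t in t₀..T,
    (Kker τ DΦ Bm x t).comp (ContinuousLinearMap.adjoint (Kker τ DΦ Bm x t))

/-- The map `L_{u,τ} v = ∫_{t₀}^T DΦ_{t,τ}(x_u(t)) B(t,x_u(t)) v(t) dt`. -/
noncomputable def Lmap {d k : ℕ} (t₀ T τ : ℝ)
    (DΦ : ℝ → ℝ → EuclideanSpace ℝ (Fin d) →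
      (EuclideanSpace ℝ (Fin d) →L[ℝ] EuclideanSpace ℝ (Fin d)))
    (Bm : ℝ → EuclideanSpace ℝ (Fin d) →
      (EuclideanSpace ℝ (Fin k) →L[ℝ] EuclideanSpace ℝ (Fin d)))
    (x : ℝ → EuclideanSpace ℝ (Fin d))
    (w : ℝ → EuclideanSpace ℝ (Fin k)) : EuclideanSpace ℝ (Fin d) :=
  ∫ t in t₀..T, (Kker τ DΦ Bm x t) (w t)

/-- The smallest eigenvalue of a symmetric operator, as the infimum of its Rayleigh
quotient over the unit sphere. -/
noncomputable def lambdaMin {d : ℕ}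
    (M : EuclideanSpace ℝ (Fin d) →L[ℝ] EuclideanSpace ℝ (Fin d)) : ℝ :=
  ⨅ x : Metric.sphere (0 : EuclideanSpace ℝ (Fin d)) 1,
    ⟪(x : EuclideanSpace ℝ (Fin d)), M x⟫

/-- The supremum of a real-valued function over `[t₀, T]` (the `L^∞((t₀,T))`-norm for
continuous representatives). -/
noncomputable def supIcc (t₀ T : ℝ) (f : ℝ → ℝ) : ℝ := sSup (f '' Icc t₀ T)

/-- A control is admissible when it is measurable and bounded on `[t₀, T]`
(i.e. belongs to `L^∞((t₀,T);ℝ^k)`). -/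
def Adm {k : ℕ} (t₀ T : ℝ) (u : ℝ → EuclideanSpace ℝ (Fin k)) : Prop :=
  Measurable u ∧ ∃ M : ℝ, ∀ t ∈ Icc t₀ T, ‖u t‖ ≤ M

/-- The feasible coercivity class `ℱ(C) = {u ∈ L^∞ : λ_min(𝒩(u)) ≥ C⁻¹}`. -/
def Fcl {d k : ℕ} (t₀ T τ C : ℝ)
    (DΦ : ℝ → ℝ → EuclideanSpace ℝ (Fin d) →
      (EuclideanSpace ℝ (Fin d) →L[ℝ] EuclideanSpace ℝ (Fin d)))
    (Bm : ℝ → EuclideanSpace ℝ (Fin d) →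
      (EuclideanSpace ℝ (Fin k) →L[ℝ] EuclideanSpace ℝ (Fin d)))
    (xSol : (ℝ → EuclideanSpace ℝ (Fin k)) → ℝ → EuclideanSpace ℝ (Fin d)) :
    Set (ℝ → EuclideanSpace ℝ (Fin k)) :=
  {u | Adm t₀ T u ∧ C⁻¹ ≤ lambdaMin (gram t₀ T τ DΦ Bm (xSol u))}

/-- The feasibility ball `ℱ(y) = {u ∈ ℱ(C) : ‖u‖_∞ ≤ ζ}` with
`ζ = C ‖B‖_∞ e^{Λ₁(T−t₀)} |y|`. -/
def Fball {d k : ℕ} (t₀ T τ C Λ₁ Bsup : ℝ)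
    (DΦ : ℝ → ℝ → EuclideanSpace ℝ (Fin d) →
      (EuclideanSpace ℝ (Fin d) →L[ℝ] EuclideanSpace ℝ (Fin d)))
    (Bm : ℝ → EuclideanSpace ℝ (Fin d) →
      (EuclideanSpace ℝ (Fin k) →L[ℝ] EuclideanSpace ℝ (Fin d)))
    (xSol : (ℝ → EuclideanSpace ℝ (Fin k)) → ℝ → EuclideanSpace ℝ (Fin d))
    (y : EuclideanSpace ℝ (Fin d)) :
    Set (ℝ → EuclideanSpace ℝ (Fin k)) :=
  {u | u ∈ Fcl t₀ T τ C DΦ Bm xSol ∧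
    ∀ t ∈ Icc t₀ T, ‖u t‖ ≤ C * Bsup * Real.exp (Λ₁ * (T - t₀)) * ‖y‖}

/-- The synthesis map `𝒮(u)(t) = B(t,x_u(t))^⊤ DΦ_{t,τ}(x_u(t))^⊤ 𝒩(u)⁻¹ y`. -/
noncomputable def Smap {d k : ℕ} (t₀ T τ : ℝ)
    (DΦ : ℝ → ℝ → EuclideanSpace ℝ (Fin d) →
      (EuclideanSpace ℝ (Fin d) →L[ℝ] EuclideanSpace ℝ (Fin d)))
    (Bm : ℝ → EuclideanSpace ℝ (Fin d) →
      (EuclideanSpace ℝ (Fin k) →L[ℝ] EuclideanSpace ℝ (Fin d)))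
    (xSol : (ℝ → EuclideanSpace ℝ (Fin k)) → ℝ → EuclideanSpace ℝ (Fin d))
    (y : EuclideanSpace ℝ (Fin d))
    (u : ℝ → EuclideanSpace ℝ (Fin k)) : ℝ → EuclideanSpace ℝ (Fin k) :=
  fun t => ContinuousLinearMap.adjoint (Kker τ DΦ Bm (xSol u) t)
    ((gram t₀ T τ DΦ Bm (xSol u)).inverse y)

open scoped Topology
open ContinuousLinearMap (adjoint)

/-!
Write `K(t) = DΦ_{t,τ}(x(t)) B(t, x(t))`, so that `⟪y, 𝒩 y⟫ = ∫ |K(t)ᵀ y|²`. By the group law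
`DΦ_{t,τ}(x)` has the inverse `DΦ_{τ,t}(Φ_{t,τ} x)`, whose norm Grönwall's inequality for the
variational equation bounds by `e^{Λ₁Δt₀}`; hence `|DΦ_{t,τ}(x)ᵀ y| ≥ e^{-Λ₁Δt₀} |y|` and
`|K(t)ᵀ y| ≥ e^{-Λ₁Δt₀} b(t) |y|`. Cauchy–Schwarz, `(∫ f)² ≤ Δt₀ ∫ f²`, turns this into the
coercivity bound, from which the bounds on `λ_min` and `ℱ(Cᵢ)` follow.

The Bochner integral defining `𝒩` is not the junk value `0` because `t ↦ DΦ_{t,τ}(x(t))` is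
continuous: `DΦ_{t',τ}(x(t')) = DΦ_{t,τ}(Φ_{t',t} x(t')) ∘ DΦ_{t',t}(x(t'))`, where
`Φ_{t',t} x(t') → x(t)` and `DΦ_{t',t} → id` uniformly as `t' → t`.
-/

section Gronwall

variable {E : Type*} [NormedAddCommGroup E] [NormedSpace ℝ E]

theorem norm_le_mul_exp_of_norm_deriv_le {f f' : ℝ → E} {s r K : ℝ} (hsr : s ≤ r)
    (hf : ∀ t ∈ Icc s r, HasDerivAt f (f' t) t)
    (bound : ∀ t ∈ Icc s r, ‖f' t‖ ≤ K * ‖f t‖) :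
    ‖f r‖ ≤ ‖f s‖ * Real.exp (K * (r - s)) := by
  rw [← gronwallBound_ε0]
  refine norm_le_gronwallBound_of_norm_deriv_right_le
    (fun t ht => (hf t ht).continuousAt.continuousWithinAt)
    (fun t ht => (hf t (Ico_subset_Icc_self ht)).hasDerivWithinAt) le_rfl
    (fun t ht => by simpa using bound t (Ico_subset_Icc_self ht)) r (right_mem_Icc.2 hsr)

theorem norm_le_mul_exp_abs_of_norm_deriv_le {f f' : ℝ → E} {a b s r K : ℝ}
    (hs : s ∈ Icc a b) (hr : r ∈ Icc a b) (hf : ∀ t ∈ Icc a b, HasDerivAt f (f' t) t)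
    (bound : ∀ t ∈ Icc a b, ‖f' t‖ ≤ K * ‖f t‖) :
    ‖f r‖ ≤ ‖f s‖ * Real.exp (K * |r - s|) := by
  rcases le_total s r with hsr | hrs
  · have hsub : Icc s r ⊆ Icc a b := Icc_subset_Icc hs.1 hr.2
    rw [abs_of_nonneg (sub_nonneg.2 hsr)]
    exact norm_le_mul_exp_of_norm_deriv_le hsr (fun t ht => hf t (hsub ht))
      (fun t ht => bound t (hsub ht))
  · -- backwards in time: the forward estimate for `t ↦ f (-t)`
    have hsub : ∀ t ∈ Icc (-s) (-r), -t ∈ Icc a b := fun t ht =>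
      ⟨by linarith [hr.1, ht.2], by linarith [hs.2, ht.1]⟩
    have key := norm_le_mul_exp_of_norm_deriv_le (f := fun t => f (-t)) (f' := fun t => -f' (-t))
      (neg_le_neg hrs) (fun t ht => by
        simpa [Function.comp_def] using (hf (-t) (hsub t ht)).scomp t (hasDerivAt_neg t))
      (fun t ht => by simpa using bound (-t) (hsub t ht))
    rw [abs_of_nonpos (sub_nonpos.2 hrs)]
    simpa [sub_eq_add_neg, add_comm] using key

end Gronwall

structure IsLinearizedFlow {E : Type*} [NormedAddCommGroup E] [NormedSpace ℝ E]
    (N : ℝ → E → E) (Φ : ℝ → ℝ → E → E) (DΦ : ℝ → ℝ → E → E →L[ℝ] E) (I : Set ℝ) :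
    Prop where
  flow_self : ∀ s z, Φ s s z = z
  hasDerivAt_flow : ∀ s z, ∀ t ∈ I, HasDerivAt (fun r => Φ s r z) (N t (Φ s t z)) t
  flow_trans : ∀ t₁ t₂ t₃ z, Φ t₂ t₃ (Φ t₁ t₂ z) = Φ t₁ t₃ z
  contDiff : ∀ s t, ContDiff ℝ 1 (Φ s t)
  linearization_eq_fderiv : ∀ s t z, DΦ s t z = fderiv ℝ (Φ s t) z
  hasDerivAt_linearization : ∀ s z, ∀ t ∈ I,
    HasDerivAt (fun r => DΦ s r z) ((fderiv ℝ (N t) (Φ s t z)).comp (DΦ s t z)) t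

namespace IsLinearizedFlow

variable {E : Type*} [NormedAddCommGroup E] [NormedSpace ℝ E]
  {N : ℝ → E → E} {Φ : ℝ → ℝ → E → E} {DΦ : ℝ → ℝ → E → E →L[ℝ] E}

theorem linearization_self {I : Set ℝ} (hΦ : IsLinearizedFlow N Φ DΦ I) (s : ℝ) (z : E) :
    DΦ s s z = ContinuousLinearMap.id ℝ E := by
  rw [hΦ.linearization_eq_fderiv, show Φ s s = id from funext (hΦ.flow_self s), fderiv_id]

theorem linearization_trans {I : Set ℝ} (hΦ : IsLinearizedFlow N Φ DΦ I) (s t r : ℝ)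
    (z : E) :
    DΦ s r z = (DΦ t r (Φ s t z)).comp (DΦ s t z) := by
  have hdiff : ∀ s t, Differentiable ℝ (Φ s t) := fun s t =>
    (hΦ.contDiff s t).differentiable one_ne_zero
  rw [hΦ.linearization_eq_fderiv, hΦ.linearization_eq_fderiv, hΦ.linearization_eq_fderiv,
    ← fderiv_comp z (hdiff t r _) (hdiff s t z)]
  congr 1
  exact funext fun w => (hΦ.flow_trans s t r w).symm

variable {t₀ T Λ : ℝ}

theorem norm_linearization_le (hΦ : IsLinearizedFlow N Φ DΦ (Icc t₀ T))
    (hDN : ∀ t ∈ Icc t₀ T, ∀ w, ‖fderiv ℝ (N t) w‖ ≤ Λ) {s r : ℝ}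
    (hs : s ∈ Icc t₀ T) (hr : r ∈ Icc t₀ T) (z : E) :
    ‖DΦ s r z‖ ≤ Real.exp (Λ * (T - t₀)) := by
  have hΛ : 0 ≤ Λ := (norm_nonneg _).trans (hDN s hs 0)
  have hgron := norm_le_mul_exp_abs_of_norm_deriv_le hs hr (hΦ.hasDerivAt_linearization s z)
    (fun t ht => (ContinuousLinearMap.opNorm_comp_le _ _).trans
      (mul_le_mul_of_nonneg_right (hDN t ht _) (norm_nonneg _)))
  rw [hΦ.linearization_self] at hgron
  have hrs : |r - s| ≤ T - t₀ :=
    abs_sub_le_iff.2 ⟨by linarith [hr.2, hs.1], by linarith [hs.2, hr.1]⟩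
  calc ‖DΦ s r z‖ ≤ 1 * Real.exp (Λ * |r - s|) := hgron.trans
        (mul_le_mul_of_nonneg_right ContinuousLinearMap.norm_id_le (Real.exp_pos _).le)
    _ ≤ Real.exp (Λ * (T - t₀)) := by
        rw [one_mul]
        exact Real.exp_le_exp.2 (mul_le_mul_of_nonneg_left hrs hΛ)

theorem norm_flow_sub_le (hΦ : IsLinearizedFlow N Φ DΦ (Icc t₀ T))
    (hDN : ∀ t ∈ Icc t₀ T, ∀ w, ‖fderiv ℝ (N t) w‖ ≤ Λ) {s r : ℝ}
    (hs : s ∈ Icc t₀ T) (hr : r ∈ Icc t₀ T) (z z' : E) :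
    ‖Φ s r z - Φ s r z'‖ ≤ Real.exp (Λ * (T - t₀)) * ‖z - z'‖ :=
  convex_univ.norm_image_sub_le_of_norm_fderiv_le
    (fun _ _ => ((hΦ.contDiff s r).differentiable one_ne_zero).differentiableAt)
    (fun w _ => hΦ.linearization_eq_fderiv s r w ▸ hΦ.norm_linearization_le hDN hs hr w)
    (mem_univ z') (mem_univ z)

theorem norm_linearization_sub_id_le (hΦ : IsLinearizedFlow N Φ DΦ (Icc t₀ T))
    (hDN : ∀ t ∈ Icc t₀ T, ∀ w, ‖fderiv ℝ (N t) w‖ ≤ Λ) {s r : ℝ}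
    (hs : s ∈ Icc t₀ T) (hr : r ∈ Icc t₀ T) (z : E) :
    ‖DΦ s r z - ContinuousLinearMap.id ℝ E‖
      ≤ Λ * Real.exp (Λ * (T - t₀)) * |r - s| := by
  rw [← hΦ.linearization_self s z, ← Real.norm_eq_abs]
  refine (convex_Icc t₀ T).norm_image_sub_le_of_norm_hasDerivWithin_le
    (fun t ht => (hΦ.hasDerivAt_linearization s z t ht).hasDerivWithinAt) (fun t ht => ?_) hs hr
  exact (ContinuousLinearMap.opNorm_comp_le _ _).trans
    (mul_le_mul (hDN t ht _) (hΦ.norm_linearization_le hDN hs ht z) (norm_nonneg _)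
      ((norm_nonneg _).trans (hDN t ht 0)))

theorem continuousWithinAt_flow_apply (hΦ : IsLinearizedFlow N Φ DΦ (Icc t₀ T))
    (hDN : ∀ t ∈ Icc t₀ T, ∀ w, ‖fderiv ℝ (N t) w‖ ≤ Λ) {x : ℝ → E} {t : ℝ}
    (ht : t ∈ Icc t₀ T) (hx : ContinuousWithinAt x (Icc t₀ T) t) :
    ContinuousWithinAt (fun t' => Φ t' t (x t')) (Icc t₀ T) t := by
  have hback : ContinuousWithinAt (fun t' => x t' - Φ t t' (x t)) (Icc t₀ T) t :=
    hx.sub (hΦ.hasDerivAt_flow t (x t) t ht).continuousAt.continuousWithinAt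
  rw [ContinuousWithinAt, tendsto_iff_norm_sub_tendsto_zero]
  refine squeeze_zero' (Eventually.of_forall fun _ => norm_nonneg _) ?_
    (by simpa [hΦ.flow_self] using (hback.norm.const_mul (Real.exp (Λ * (T - t₀)))).tendsto)
  filter_upwards [self_mem_nhdsWithin] with t' ht'
  calc ‖Φ t' t (x t') - Φ t t (x t)‖ = ‖Φ t' t (x t') - Φ t' t (Φ t t' (x t))‖ := by
        rw [hΦ.flow_trans]
    _ ≤ _ := hΦ.norm_flow_sub_le hDN ht' ht _ _

theorem continuousOn_linearization_comp (hΦ : IsLinearizedFlow N Φ DΦ (Icc t₀ T))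
    (hDN : ∀ t ∈ Icc t₀ T, ∀ w, ‖fderiv ℝ (N t) w‖ ≤ Λ) {x : ℝ → E}
    (hx : ContinuousOn x (Icc t₀ T)) (τ : ℝ) :
    ContinuousOn (fun t => DΦ t τ (x t)) (Icc t₀ T) := by
  intro t ht
  have hcont : Continuous (DΦ t τ) := by
    rw [funext (hΦ.linearization_eq_fderiv t τ)]
    exact (hΦ.contDiff t τ).continuous_fderiv one_ne_zero
  have hout : ContinuousWithinAt (fun t' => DΦ t τ (Φ t' t (x t'))) (Icc t₀ T) t :=
    hcont.continuousAt.comp_continuousWithinAt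
      (hΦ.continuousWithinAt_flow_apply hDN ht (hx t ht))
  have hin : ContinuousWithinAt (fun t' => DΦ t' t (x t')) (Icc t₀ T) t := by
    have hlim : Tendsto (fun t' => Λ * Real.exp (Λ * (T - t₀)) * |t - t'|)
        (𝓝[Icc t₀ T] t) (𝓝 0) := by
      have hc : Continuous fun t' : ℝ => Λ * Real.exp (Λ * (T - t₀)) * |t - t'| := by fun_prop
      simpa using (hc.tendsto t).mono_left nhdsWithin_le_nhds
    rw [ContinuousWithinAt, tendsto_iff_norm_sub_tendsto_zero]
    refine squeeze_zero' (Eventually.of_forall fun _ => norm_nonneg _) ?_ hlim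
    filter_upwards [self_mem_nhdsWithin] with t' ht'
    rw [hΦ.linearization_self]
    exact hΦ.norm_linearization_sub_id_le hDN ht' ht _
  refine (hout.clm_comp hin).congr (fun t' _ => hΦ.linearization_trans t' t τ _) ?_
  rw [hΦ.linearization_trans t t τ, hΦ.flow_self]

end IsLinearizedFlow

theorem sq_integral_le_measureReal_univ_mul_integral_sq {α : Type*} [MeasurableSpace α]
    {μ : Measure α} [IsFiniteMeasure μ] {f : α → ℝ} (hf : MemLp f 2 μ) :
    (∫ t, f t ∂μ) ^ 2 ≤ μ.real univ * ∫ t, f t ^ 2 ∂μ := by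
  rcases eq_zero_or_neZero μ with rfl | _
  · simp
  set m := μ.real univ
  set I := ∫ t, f t ∂μ
  have hf1 : Integrable f μ := hf.integrable one_le_two
  have hf2 : Integrable (fun t => f t ^ 2) μ := hf.integrable_sq
  have hexpand : ∫ t, (m * f t - I) ^ 2 ∂μ = m * (m * ∫ t, f t ^ 2 ∂μ - I ^ 2) := by
    simp_rw [show ∀ t, (m * f t - I) ^ 2 = m ^ 2 * f t ^ 2 - 2 * m * I * f t + I ^ 2 from
      fun t => by ring]
    have hlin : Integrable (fun t => m ^ 2 * f t ^ 2 - 2 * m * I * f t) μ :=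
      (hf2.const_mul _).sub (hf1.const_mul _)
    rw [integral_add hlin (integrable_const _), integral_sub (hf2.const_mul _) (hf1.const_mul _),
      MeasureTheory.integral_const_mul, MeasureTheory.integral_const_mul,
      MeasureTheory.integral_const, smul_eq_mul]
    ring
  have hnonneg : 0 ≤ m * (m * ∫ t, f t ^ 2 ∂μ - I ^ 2) :=
    hexpand ▸ integral_nonneg fun t => sq_nonneg _
  linarith [(mul_nonneg_iff_of_pos_left measureReal_univ_pos).1 hnonneg]

section InnerProduct

variable {E F : Type*} [NormedAddCommGroup E] [InnerProductSpace ℝ E] [CompleteSpace E]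
  [NormedAddCommGroup F] [InnerProductSpace ℝ F] [CompleteSpace F]

theorem norm_le_norm_mul_norm_adjoint_apply {A : E →L[ℝ] F} {B : F →L[ℝ] E}
    (hAB : A.comp B = ContinuousLinearMap.id ℝ F) (y : F) :
    ‖y‖ ≤ ‖B‖ * ‖adjoint A y‖ :=
  calc ‖y‖ = ‖adjoint B (adjoint A y)‖ := by
        rw [← ContinuousLinearMap.comp_apply, ← ContinuousLinearMap.adjoint_comp, hAB,
          ContinuousLinearMap.adjoint_id, ContinuousLinearMap.id_apply]
    _ ≤ ‖adjoint B‖ * ‖adjoint A y‖ := ContinuousLinearMap.le_opNorm _ _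
    _ = ‖B‖ * ‖adjoint A y‖ := by rw [LinearIsometryEquiv.norm_map]

theorem IsLinearizedFlow.norm_le_mul_norm_adjoint_linearization_apply {N : ℝ → E → E}
    {Φ : ℝ → ℝ → E → E} {DΦ : ℝ → ℝ → E → E →L[ℝ] E} {t₀ T Λ : ℝ}
    (hΦ : IsLinearizedFlow N Φ DΦ (Icc t₀ T))
    (hDN : ∀ t ∈ Icc t₀ T, ∀ w, ‖fderiv ℝ (N t) w‖ ≤ Λ) {t τ : ℝ}
    (ht : t ∈ Icc t₀ T) (hτ : τ ∈ Icc t₀ T) (z y : E) :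
    ‖y‖ ≤ Real.exp (Λ * (T - t₀)) * ‖adjoint (DΦ t τ z) y‖ := by
  have hinv : (DΦ t τ z).comp (DΦ τ t (Φ t τ z)) = ContinuousLinearMap.id ℝ E := by
    have h := hΦ.linearization_trans τ t τ (Φ t τ z)
    rwa [hΦ.flow_trans, hΦ.flow_self, hΦ.linearization_self, eq_comm] at h
  exact (norm_le_norm_mul_norm_adjoint_apply hinv y).trans
    (mul_le_mul_of_nonneg_right (hΦ.norm_linearization_le hDN hτ ht _) (norm_nonneg _))

variable {α : Type*} [MeasurableSpace α] {μ : Measure α} {K : α → E →L[ℝ] F}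

theorem integrable_comp_adjoint [IsFiniteMeasure μ] (hK : AEStronglyMeasurable K μ) {C : ℝ}
    (hC : ∀ᵐ t ∂μ, ‖K t‖ ≤ C) :
    Integrable (fun t => (K t).comp (adjoint (K t))) μ := by
  have hadj : AEStronglyMeasurable (fun t => adjoint (K t)) μ :=
    (adjoint (𝕜 := ℝ) (E := E) (F := F)).continuous.comp_aestronglyMeasurable hK
  have hmeas : AEStronglyMeasurable (fun t => (K t).comp (adjoint (K t))) μ :=
    (isBoundedBilinearMap_comp (𝕜 := ℝ)).continuous.comp_aestronglyMeasurable (hK.prodMk hadj)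
  refine Integrable.of_bound hmeas (C * C) ?_
  filter_upwards [hC] with t ht
  calc ‖(K t).comp (adjoint (K t))‖ ≤ ‖K t‖ * ‖adjoint (K t)‖ :=
        ContinuousLinearMap.opNorm_comp_le _ _
    _ = ‖K t‖ * ‖K t‖ := by rw [LinearIsometryEquiv.norm_map]
    _ ≤ C * C := mul_self_le_mul_self (norm_nonneg _) ht

theorem inner_integral_comp_adjoint_apply
    (hK : Integrable (fun t => (K t).comp (adjoint (K t))) μ) (y : F) :
    ⟪y, (∫ t, (K t).comp (adjoint (K t)) ∂μ) y⟫ = ∫ t, ‖adjoint (K t) y‖ ^ 2 ∂μ := by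
  rw [ContinuousLinearMap.integral_apply hK, ← integral_inner (hK.apply_continuousLinearMap y)]
  congr 1
  funext t
  rw [ContinuousLinearMap.comp_apply, ← ContinuousLinearMap.adjoint_inner_left,
    real_inner_self_eq_norm_sq]

theorem sq_integral_le_measureReal_univ_mul_inner_integral_comp_adjoint [IsFiniteMeasure μ]
    (hK : AEStronglyMeasurable K μ) {C : ℝ} (hC : ∀ᵐ t ∂μ, ‖K t‖ ≤ C) {g : α → ℝ}
    (hg : Integrable g μ) (hg0 : 0 ≤ᵐ[μ] g) (y : F) (hgK : ∀ᵐ t ∂μ, g t ≤ ‖adjoint (K t) y‖) :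
    (∫ t, g t ∂μ) ^ 2 ≤ μ.real univ * ⟪y, (∫ t, (K t).comp (adjoint (K t)) ∂μ) y⟫ := by
  have hmeas : AEStronglyMeasurable (fun t => ‖adjoint (K t) y‖) μ := by
    have hcont : Continuous fun A : E →L[ℝ] F => ‖adjoint A y‖ := by fun_prop
    exact hcont.comp_aestronglyMeasurable hK
  have hL2 : MemLp (fun t => ‖adjoint (K t) y‖) 2 μ := by
    refine MemLp.of_bound hmeas (C * ‖y‖) ?_
    filter_upwards [hC] with t ht
    rw [norm_norm]
    calc ‖adjoint (K t) y‖ ≤ ‖adjoint (K t)‖ * ‖y‖ := ContinuousLinearMap.le_opNorm _ _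
      _ ≤ C * ‖y‖ := by
          rw [LinearIsometryEquiv.norm_map]
          exact mul_le_mul_of_nonneg_right ht (norm_nonneg _)
  rw [inner_integral_comp_adjoint_apply (integrable_comp_adjoint hK hC)]
  calc (∫ t, g t ∂μ) ^ 2 ≤ (∫ t, ‖adjoint (K t) y‖ ∂μ) ^ 2 :=
        pow_le_pow_left₀ (integral_nonneg_of_ae hg0)
          (integral_mono_ae hg (hL2.integrable one_le_two) hgK) 2
    _ ≤ _ := sq_integral_le_measureReal_univ_mul_integral_sq hL2

end InnerProduct

theorem aestronglyMeasurable_Kker {d k : ℕ} {τ : ℝ}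
    {DΦ : ℝ → ℝ → EuclideanSpace ℝ (Fin d) →
      (EuclideanSpace ℝ (Fin d) →L[ℝ] EuclideanSpace ℝ (Fin d))}
    {Bm : ℝ → EuclideanSpace ℝ (Fin d) →
      (EuclideanSpace ℝ (Fin k) →L[ℝ] EuclideanSpace ℝ (Fin d))}
    {x : ℝ → EuclideanSpace ℝ (Fin d)} {s : Set ℝ} {μ : Measure ℝ} (hs : MeasurableSet s)
    (hx : ContinuousOn x s) (hF : ContinuousOn (fun t => DΦ t τ (x t)) s)
    (hBmeas : ∀ z, Measurable fun t => Bm t z) (hBcont : ∀ t, Continuous (Bm t)) :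
    AEStronglyMeasurable (Kker τ DΦ Bm x) (μ.restrict s) := by
  have hB : StronglyMeasurable (Function.uncurry fun z t => Bm t z) :=
    stronglyMeasurable_uncurry_of_continuous_of_stronglyMeasurable hBcont
      (fun z => (hBmeas z).stronglyMeasurable)
  have hBx : AEStronglyMeasurable (fun t => Bm t (x t)) (μ.restrict s) :=
    hB.aestronglyMeasurable.comp_aemeasurable ((hx.aemeasurable hs).prodMk aemeasurable_id)
  exact (isBoundedBilinearMap_comp (𝕜 := ℝ)).continuous.comp_aestronglyMeasurable
    ((hF.aestronglyMeasurable hs).prodMk hBx)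

theorem le_lambdaMin {d : ℕ} (hd : 0 < d)
    {M : EuclideanSpace ℝ (Fin d) →L[ℝ] EuclideanSpace ℝ (Fin d)} {c : ℝ}
    (hM : ∀ y, c * ‖y‖ ^ 2 ≤ ⟪y, M y⟫) : c ≤ lambdaMin M := by
  have : Nonempty (Fin d) := ⟨⟨0, hd⟩⟩
  have : Nonempty (Metric.sphere (0 : EuclideanSpace ℝ (Fin d)) 1) :=
    (NormedSpace.sphere_nonempty.2 zero_le_one).to_subtype
  exact le_ciInf fun y => by simpa [norm_eq_of_mem_sphere y] using hM y

theorem IsLinearizedFlow.le_inner_gram {d k : ℕ} {t₀ T Λ Bsup τ : ℝ} (ht : t₀ < T)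
    {N : ℝ → EuclideanSpace ℝ (Fin d) → EuclideanSpace ℝ (Fin d)}
    {Φ : ℝ → ℝ → EuclideanSpace ℝ (Fin d) → EuclideanSpace ℝ (Fin d)}
    {DΦ : ℝ → ℝ → EuclideanSpace ℝ (Fin d) →
      (EuclideanSpace ℝ (Fin d) →L[ℝ] EuclideanSpace ℝ (Fin d))}
    (hΦ : IsLinearizedFlow N Φ DΦ (Icc t₀ T))
    (hDN : ∀ t ∈ Icc t₀ T, ∀ w, ‖fderiv ℝ (N t) w‖ ≤ Λ) (hτ : τ ∈ Icc t₀ T)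
    {Bm : ℝ → EuclideanSpace ℝ (Fin d) →
      (EuclideanSpace ℝ (Fin k) →L[ℝ] EuclideanSpace ℝ (Fin d))}
    (hBmeas : ∀ z, Measurable fun t => Bm t z) (hBcont : ∀ t, Continuous (Bm t))
    (hBsup : ∀ t ∈ Icc t₀ T, ∀ z, ‖Bm t z‖ ≤ Bsup)
    {b : ℝ → ℝ} (hbnn : ∀ t, 0 ≤ b t) (hbint : IntervalIntegrable b volume t₀ T)
    (hBcoer : ∀ᵐ t ∂(volume.restrict (Ioc t₀ T)), ∀ z y, b t * ‖y‖ ≤ ‖adjoint (Bm t z) y‖)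
    {x : ℝ → EuclideanSpace ℝ (Fin d)} (hx : ContinuousOn x (Icc t₀ T))
    (y : EuclideanSpace ℝ (Fin d)) :
    Real.exp (-2 * Λ * (T - t₀)) * (∫ t in t₀..T, b t) ^ 2 / (T - t₀) * ‖y‖ ^ 2
      ≤ ⟪y, gram t₀ T τ DΦ Bm x y⟫ := by
  set c := Real.exp (-(Λ * (T - t₀)))
  have hK : AEStronglyMeasurable (Kker τ DΦ Bm x) (volume.restrict (Ioc t₀ T)) :=
    aestronglyMeasurable_Kker measurableSet_Ioc (hx.mono Ioc_subset_Icc_self)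
      ((hΦ.continuousOn_linearization_comp hDN hx τ).mono Ioc_subset_Icc_self) hBmeas hBcont
  have hKC : ∀ᵐ t ∂(volume.restrict (Ioc t₀ T)),
      ‖Kker τ DΦ Bm x t‖ ≤ Real.exp (Λ * (T - t₀)) * Bsup := by
    refine ae_restrict_of_forall_mem measurableSet_Ioc fun t ht => ?_
    exact (ContinuousLinearMap.opNorm_comp_le _ _).trans
      (mul_le_mul (hΦ.norm_linearization_le hDN (Ioc_subset_Icc_self ht) hτ _)
        (hBsup t (Ioc_subset_Icc_self ht) _) (norm_nonneg _) (Real.exp_pos _).le)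
  have hgK : ∀ᵐ t ∂(volume.restrict (Ioc t₀ T)),
      c * ‖y‖ * b t ≤ ‖adjoint (Kker τ DΦ Bm x t) y‖ := by
    filter_upwards [hBcoer, ae_restrict_mem measurableSet_Ioc] with t hBt ht
    have hFy := hΦ.norm_le_mul_norm_adjoint_linearization_apply hDN
      (Ioc_subset_Icc_self ht) hτ (x t) y
    have hcy : c * ‖y‖ ≤ ‖adjoint (DΦ t τ (x t)) y‖ :=
      calc c * ‖y‖ ≤ c * (Real.exp (Λ * (T - t₀)) * ‖adjoint (DΦ t τ (x t)) y‖) :=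
            mul_le_mul_of_nonneg_left hFy (Real.exp_pos _).le
        _ = _ := by rw [← mul_assoc, ← Real.exp_add, neg_add_cancel, Real.exp_zero, one_mul]
    rw [Kker, ContinuousLinearMap.adjoint_comp, ContinuousLinearMap.comp_apply]
    calc c * ‖y‖ * b t ≤ b t * ‖adjoint (DΦ t τ (x t)) y‖ := by
          rw [mul_comm]; exact mul_le_mul_of_nonneg_left hcy (hbnn t)
      _ ≤ _ := hBt _ _
  have hCS := sq_integral_le_measureReal_univ_mul_inner_integral_comp_adjoint hK hKC
    (hbint.1.const_mul (c * ‖y‖))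
    (Eventually.of_forall fun t => mul_nonneg (by positivity) (hbnn t)) y hgK
  rw [measureReal_restrict_apply_univ, Real.volume_real_Ioc_of_le ht.le,
    MeasureTheory.integral_const_mul, ← intervalIntegral.integral_of_le ht.le,
    ← intervalIntegral.integral_of_le ht.le] at hCS
  rw [div_mul_eq_mul_div, div_le_iff₀ (sub_pos.2 ht)]
  refine le_of_eq_of_le ?_ (hCS.trans_eq (mul_comm _ _))
  rw [mul_pow, mul_pow, ← Real.exp_nat_mul]
  ring_nf

theorem stmt11_general
    (d : ℕ) (hd : 0 < d) (t₀ T Λ₁ Bsup : ℝ) (ht : t₀ < T)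
    (N : ℝ → EuclideanSpace ℝ (Fin d) → EuclideanSpace ℝ (Fin d))
    (hDN : ∀ t w, ‖fderiv ℝ (N t) w‖ ≤ Λ₁)
    (Φ : ℝ → ℝ → EuclideanSpace ℝ (Fin d) → EuclideanSpace ℝ (Fin d))
    (DΦ : ℝ → ℝ → EuclideanSpace ℝ (Fin d) →
      (EuclideanSpace ℝ (Fin d) →L[ℝ] EuclideanSpace ℝ (Fin d)))
    (hflow_init : ∀ s x, Φ s s x = x)
    (hflow_ode : ∀ s x, ∀ t ∈ Icc t₀ T, HasDerivAt (fun τ' => Φ s τ' x) (N t (Φ s t x)) t)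
    (hgroup : ∀ t₁ t₂ t₃ : ℝ, ∀ x, Φ t₂ t₃ (Φ t₁ t₂ x) = Φ t₁ t₃ x)
    (hΦC1 : ∀ s t : ℝ, ContDiff ℝ 1 (Φ s t))
    (hDΦ_fderiv : ∀ s t x, DΦ s t x = fderiv ℝ (Φ s t) x)
    (hDΦ_ode : ∀ s x, ∀ t ∈ Icc t₀ T,
      HasDerivAt (fun τ' => DΦ s τ' x) ((fderiv ℝ (N t) (Φ s t x)).comp (DΦ s t x)) t)
    -- the input matrix, with k = d
    (Bm : ℝ → EuclideanSpace ℝ (Fin d) →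
      (EuclideanSpace ℝ (Fin d) →L[ℝ] EuclideanSpace ℝ (Fin d)))
    (hBmeas : ∀ x, Measurable fun t => Bm t x)
    (hBsup : ∀ t ∈ Icc t₀ T, ∀ x, ‖Bm t x‖ ≤ Bsup)
    (hBC1 : ∀ t, ContDiff ℝ 1 (Bm t))
    -- the solution map, for every initial state and bounded control
    (xSol : EuclideanSpace ℝ (Fin d) → (ℝ → EuclideanSpace ℝ (Fin d)) →
      ℝ → EuclideanSpace ℝ (Fin d))
    (hxSol : ∀ x0 u, Adm t₀ T u →
      ContinuousOn (xSol x0 u) (Icc t₀ T) ∧ xSol x0 u t₀ = x0 ∧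
      ∀ t ∈ Icc t₀ T, xSol x0 u t
        = x0 + ∫ s in t₀..t, (N s (xSol x0 u s) + Bm s (xSol x0 u s) (u s)))
    -- the structural nondegeneracy assumption on B
    (b : ℝ → ℝ) (hbnn : ∀ t, 0 ≤ b t)
    (hbint : IntervalIntegrable b MeasureTheory.volume t₀ T)
    (hBcoer : ∀ᵐ t ∂(MeasureTheory.volume.restrict (Ioc t₀ T)),
      ∀ x y : EuclideanSpace ℝ (Fin d),
        b t * ‖y‖ ≤ ‖ContinuousLinearMap.adjoint (Bm t x) y‖) :
    ∀ τ : ℝ, (τ = t₀ ∨ τ = T) →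
      ∀ (x0 : EuclideanSpace ℝ (Fin d)) (u : ℝ → EuclideanSpace ℝ (Fin d)), Adm t₀ T u →
        (∀ y : EuclideanSpace ℝ (Fin d),
          Real.exp (-2 * Λ₁ * (T - t₀)) * (∫ t in t₀..T, b t) ^ 2 / (T - t₀) * ‖y‖ ^ 2
            ≤ ⟪y, gram t₀ T τ DΦ Bm (xSol x0 u) y⟫) ∧
        ((T - t₀) * Real.exp (2 * Λ₁ * (T - t₀)) * ((∫ t in t₀..T, b t) ^ 2)⁻¹)⁻¹
          ≤ lambdaMin (gram t₀ T τ DΦ Bm (xSol x0 u)) ∧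
        Fcl t₀ T τ ((T - t₀) * Real.exp (2 * Λ₁ * (T - t₀)) * ((∫ t in t₀..T, b t) ^ 2)⁻¹)
            DΦ Bm (xSol x0) = {u | Adm t₀ T u} := by
  intro τ hτ
  have hΦ : IsLinearizedFlow N Φ DΦ (Icc t₀ T) :=
    ⟨hflow_init, hflow_ode, hgroup, hΦC1, hDΦ_fderiv, hDΦ_ode⟩
  have hτI : τ ∈ Icc t₀ T := by rcases hτ with rfl | rfl <;> simp [ht.le]
  have hcoer : ∀ x0 u, Adm t₀ T u → ∀ y : EuclideanSpace ℝ (Fin d),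
      Real.exp (-2 * Λ₁ * (T - t₀)) * (∫ t in t₀..T, b t) ^ 2 / (T - t₀) * ‖y‖ ^ 2
        ≤ ⟪y, gram t₀ T τ DΦ Bm (xSol x0 u) y⟫ := fun x0 u hu =>
    hΦ.le_inner_gram ht (fun t _ w => hDN t w) hτI hBmeas (fun t => (hBC1 t).continuous) hBsup
      hbnn hbint hBcoer (hxSol x0 u hu).1
  have hlam : ∀ x0 u, Adm t₀ T u →
      ((T - t₀) * Real.exp (2 * Λ₁ * (T - t₀)) * ((∫ t in t₀..T, b t) ^ 2)⁻¹)⁻¹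
        ≤ lambdaMin (gram t₀ T τ DΦ Bm (xSol x0 u)) := by
    intro x0 u hu
    convert le_lambdaMin hd (hcoer x0 u hu) using 1
    rw [mul_inv, mul_inv, inv_inv, ← Real.exp_neg]
    ring_nf
  intro x0 u hu
  exact ⟨hcoer x0 u hu, hlam x0 u hu,
    Set.ext fun v => ⟨And.left, fun hv => ⟨hv, hlam x0 v hv⟩⟩⟩

/-- In the fully actuated case `k = d`, if `|B(t,x)^⊤ y| ≥ b(t)|y|` for
a.e. `t` and all `x, y`, with `0 ≤ b ∈ L¹` nonzero, then the Gramian is uniformly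
coercive: `yᵀ𝒩ᵢ(u)y ≥ (e^{−2Λ₁Δt₀}‖b‖₁²/Δt₀)|y|²` for all `y`, all initial states and all
bounded controls; hence with `Cᵢ = Δt₀ e^{2Λ₁Δt₀}‖b‖₁⁻²` one has
`ℱ(Cᵢ) = L^∞((t₀,T);ℝ^k)`. -/
theorem stmt11
    (d : ℕ) (hd : 0 < d) (t₀ T Λ₁ Λ₂ L_B Bsup : ℝ) (ht : t₀ < T)
    (hΛ₁ : 0 < Λ₁) (hΛ₂ : 0 < Λ₂)
    (N : ℝ → EuclideanSpace ℝ (Fin d) → EuclideanSpace ℝ (Fin d))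
    (hNmeas : ∀ x, Measurable fun t => N t x)
    (hNbdd : ∀ x, ∃ M : ℝ, ∀ t ∈ Icc t₀ T, ‖N t x‖ ≤ M)
    (hNC2 : ∀ t, ContDiff ℝ 2 (N t))
    (hDN : ∀ t w, ‖fderiv ℝ (N t) w‖ ≤ Λ₁)
    (hD2N : ∀ t w, ‖fderiv ℝ (fderiv ℝ (N t)) w‖ ≤ Λ₂)
    (Φ : ℝ → ℝ → EuclideanSpace ℝ (Fin d) → EuclideanSpace ℝ (Fin d))
    (DΦ : ℝ → ℝ → EuclideanSpace ℝ (Fin d) →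
      (EuclideanSpace ℝ (Fin d) →L[ℝ] EuclideanSpace ℝ (Fin d)))
    (hflow_init : ∀ s x, Φ s s x = x)
    (hflow_ode : ∀ s x, ∀ t ∈ Icc t₀ T, HasDerivAt (fun τ' => Φ s τ' x) (N t (Φ s t x)) t)
    (hgroup : ∀ t₁ t₂ t₃ : ℝ, ∀ x, Φ t₂ t₃ (Φ t₁ t₂ x) = Φ t₁ t₃ x)
    (hΦC1 : ∀ s t : ℝ, ContDiff ℝ 1 (Φ s t))
    (hDΦ_fderiv : ∀ s t x, DΦ s t x = fderiv ℝ (Φ s t) x)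
    (hDΦ_init : ∀ s x, DΦ s s x = ContinuousLinearMap.id ℝ (EuclideanSpace ℝ (Fin d)))
    (hDΦ_ode : ∀ s x, ∀ t ∈ Icc t₀ T,
      HasDerivAt (fun τ' => DΦ s τ' x) ((fderiv ℝ (N t) (Φ s t x)).comp (DΦ s t x)) t)
    -- the input matrix, with k = d
    (Bm : ℝ → EuclideanSpace ℝ (Fin d) →
      (EuclideanSpace ℝ (Fin d) →L[ℝ] EuclideanSpace ℝ (Fin d)))
    (hBmeas : ∀ x, Measurable fun t => Bm t x)
    (hBsup : ∀ t ∈ Icc t₀ T, ∀ x, ‖Bm t x‖ ≤ Bsup)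
    (hBC1 : ∀ t, ContDiff ℝ 1 (Bm t))
    (hDB : ∀ t w, ‖fderiv ℝ (Bm t) w‖ ≤ L_B)
    -- the solution map, for every initial state and bounded control
    (xSol : EuclideanSpace ℝ (Fin d) → (ℝ → EuclideanSpace ℝ (Fin d)) →
      ℝ → EuclideanSpace ℝ (Fin d))
    (hxSol : ∀ x0 u, Adm t₀ T u →
      ContinuousOn (xSol x0 u) (Icc t₀ T) ∧ xSol x0 u t₀ = x0 ∧
      ∀ t ∈ Icc t₀ T, xSol x0 u t
        = x0 + ∫ s in t₀..t, (N s (xSol x0 u s) + Bm s (xSol x0 u s) (u s)))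
    -- the structural nondegeneracy assumption on B
    (b : ℝ → ℝ) (hbnn : ∀ t, 0 ≤ b t)
    (hbint : IntervalIntegrable b MeasureTheory.volume t₀ T)
    (hbne : ¬ (b =ᵐ[MeasureTheory.volume.restrict (Ioc t₀ T)] 0))
    (hBcoer : ∀ᵐ t ∂(MeasureTheory.volume.restrict (Ioc t₀ T)),
      ∀ x y : EuclideanSpace ℝ (Fin d),
        b t * ‖y‖ ≤ ‖ContinuousLinearMap.adjoint (Bm t x) y‖) :
    ∀ τ : ℝ, (τ = t₀ ∨ τ = T) →
      ∀ (x0 : EuclideanSpace ℝ (Fin d)) (u : ℝ → EuclideanSpace ℝ (Fin d)), Adm t₀ T u →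
        (∀ y : EuclideanSpace ℝ (Fin d),
          Real.exp (-2 * Λ₁ * (T - t₀)) * (∫ t in t₀..T, b t) ^ 2 / (T - t₀) * ‖y‖ ^ 2
            ≤ ⟪y, gram t₀ T τ DΦ Bm (xSol x0 u) y⟫) ∧
        ((T - t₀) * Real.exp (2 * Λ₁ * (T - t₀)) * ((∫ t in t₀..T, b t) ^ 2)⁻¹)⁻¹
          ≤ lambdaMin (gram t₀ T τ DΦ Bm (xSol x0 u)) ∧
        Fcl t₀ T τ ((T - t₀) * Real.exp (2 * Λ₁ * (T - t₀)) * ((∫ t in t₀..T, b t) ^ 2)⁻¹)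
            DΦ Bm (xSol x0) = {u | Adm t₀ T u} :=
  stmt11_general d hd t₀ T Λ₁ Bsup ht N hDN Φ DΦ hflow_init hflow_ode hgroup hΦC1 hDΦ_fderiv hDΦ_ode
    Bm hBmeas hBsup hBC1 xSol hxSol b hbnn hbint hBcoer
end
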